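/- In the USLT model (the UISLT model with α_i = 1 for all i, so that (n−1)β_j ≤ 1 for every j), for any A₀ ⊆ V with |A₀| = K and V \ A₀ = {j_1, …, j_k}, the expected influence satisfies σ^(V, A₀) = K + K ∑_{m=0}^{k-1} f^{m+1}(β_{j_1}, …, β_{j_k}). -/

import Mathlib

/-!
Splitting an acyclic path from `j ∉ D` at its first step gives
`c_W(j → D) = [j ∈ D] + [j ∈ W \ D] ∑_v w(v, j) c_{W \ {j}}(v → D)`.
When `w(v, j) = β_j` does not depend on `v`, summing over `j` shows that the total influence
`σ(W, D) = ∑_j c_W(j → D)` satisfies `σ(W, D) = |D| + ∑_{j ∈ W \ D} β_j σ(W \ {j}, D)`.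
The function `G(T) = ∑_m f^m(β|_T)` obeys the matching recursion
`G(T) = 1 + ∑_{v ∈ T} β_v G(T \ {v})`, because `∑_{v ∈ T} β_v f^m(T \ {v}) = f^{m+1}(T)`
(each `(m+1)`-subset of `T` arises from `m+1` choices of `v`). Induction on `W` then gives
`σ(W, D) = |D| G(W \ D)`.
-/

open Finset

noncomputable def cPath {V : Type*} [Fintype V] [DecidableEq V]
    (w : V → V → ℝ) (W D : Finset V) (j : V) : ℝ := by
  classical
  exact ∑' k : ℕ, ∑ x : Fin (k + 1) → V,
    if x 0 = j ∧ Function.Injective x ∧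
        (∀ m : Fin (k + 1), (m : ℕ) < k → x m ∈ W \ D) ∧ x (Fin.last k) ∈ D
    then ∏ i : Fin k, w (x i.succ) (x i.castSucc) else 0

noncomputable def cPathVia {V : Type*} [Fintype V] [DecidableEq V]
    (w : V → V → ℝ) (W D : Finset V) (j v : V) : ℝ := by
  classical
  exact ∑' k : ℕ, ∑ x : Fin (k + 1) → V,
    if x 0 = j ∧ Function.Injective x ∧
        (∀ m : Fin (k + 1), (m : ℕ) < k → x m ∈ W \ D) ∧ x (Fin.last k) ∈ D ∧
        (∃ u : Fin (k + 1), (u : ℕ) < k ∧ x u = v)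
    then ∏ i : Fin k, w (x i.succ) (x i.castSucc) else 0

noncomputable def sigmaInfl {V : Type*} [Fintype V] [DecidableEq V]
    (w : V → V → ℝ) (W A : Finset V) : ℝ :=
  ∑ j ∈ W, cPath w W A j

def pjv {V : Type*} (w : V → V → ℝ) (j v : V) : List V → ℝ
  | [] => w v j
  | l :: ls => w l j * pjv w l v ls

noncomputable def fPoly {ι : Type*} [DecidableEq ι] (m : ℕ) (T : Finset ι) (x : ι → ℝ) : ℝ :=
  (Nat.factorial m : ℝ) * ∑ S ∈ T.powersetCard m, ∏ s ∈ S, x s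


section SymmetricSums
variable {ι R : Type*} [DecidableEq ι] [CommSemiring R]

lemma sum_mul_sum_powersetCard_erase (x : ι → R) (T : Finset ι) (m : ℕ) :
    ∑ v ∈ T, x v * ∑ S ∈ (T.erase v).powersetCard m, ∏ s ∈ S, x s
      = (m + 1) * ∑ S ∈ T.powersetCard (m + 1), ∏ s ∈ S, x s := by
  have insert_fiber (v : ι) (hv : v ∈ T) :
      x v * ∑ S ∈ (T.erase v).powersetCard m, ∏ s ∈ S, x s
        = ∑ S ∈ T.powersetCard (m + 1) with v ∈ S, ∏ s ∈ S, x s := by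
    have hv_notMem {S : Finset ι} (hS : S ∈ (T.erase v).powersetCard m) : v ∉ S :=
      (subset_erase.1 (mem_powersetCard.1 hS).1).2
    rw [mul_sum]
    refine sum_nbij' (insert v) (·.erase v) (fun S hS => ?_) (fun S hS => ?_)
      (fun S hS => erase_insert (hv_notMem hS)) (fun S hS => insert_erase (mem_filter.1 hS).2)
      (fun S hS => by rw [prod_insert (hv_notMem hS)])
    · obtain ⟨hST, hcard⟩ := mem_powersetCard.1 hS
      refine mem_filter.2 ⟨mem_powersetCard.2 ⟨insert_subset hv (hST.trans (erase_subset _ _)),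
        ?_⟩, mem_insert_self _ _⟩
      rw [card_insert_of_notMem (hv_notMem hS), hcard]
    · obtain ⟨hS, hvS⟩ := mem_filter.1 hS
      obtain ⟨hST, hcard⟩ := mem_powersetCard.1 hS
      refine mem_powersetCard.2 ⟨erase_subset_erase _ hST, ?_⟩
      rw [card_erase_of_mem hvS, hcard, Nat.add_sub_cancel]
  calc ∑ v ∈ T, x v * ∑ S ∈ (T.erase v).powersetCard m, ∏ s ∈ S, x s
      = ∑ v ∈ T, ∑ S ∈ T.powersetCard (m + 1) with v ∈ S, ∏ s ∈ S, x s :=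
        sum_congr rfl insert_fiber
    _ = ∑ S ∈ T.powersetCard (m + 1), ∑ _v ∈ S, ∏ s ∈ S, x s :=
        sum_comm' fun v S => by
          simp only [mem_filter, mem_powersetCard]
          exact ⟨fun h => ⟨h.2.2, h.2.1⟩, fun h => ⟨h.2.1 h.1, h.2, h.1⟩⟩
    _ = (m + 1) * ∑ S ∈ T.powersetCard (m + 1), ∏ s ∈ S, x s := by
        rw [mul_sum]
        refine sum_congr rfl fun S hS => ?_
        rw [sum_const, (mem_powersetCard.1 hS).2, nsmul_eq_mul]
        push_cast
        rfl

end SymmetricSums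

section FPoly
variable {ι : Type*} [DecidableEq ι]

lemma fPoly_zero (T : Finset ι) (x : ι → ℝ) : fPoly 0 T x = 1 := by
  simp [fPoly]

lemma sum_mul_fPoly_erase (T : Finset ι) (x : ι → ℝ) (m : ℕ) :
    ∑ v ∈ T, x v * fPoly m (T.erase v) x = fPoly (m + 1) T x := by
  simp only [fPoly, mul_left_comm (x _), ← mul_sum, sum_mul_sum_powersetCard_erase,
    Nat.factorial_succ]
  push_cast
  ring

lemma fPoly_map {κ : Type*} [DecidableEq κ] (e : ι ↪ κ) (m : ℕ) (T : Finset ι)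
    (x : κ → ℝ) :
    fPoly m (T.map e) x = fPoly m T (x ∘ e) := by
  simp only [fPoly, powersetCard_map, sum_map, RelEmbedding.coe_toEmbedding, mapEmbedding_apply,
    prod_map, Function.comp_apply]

noncomputable def fPolySum (T : Finset ι) (x : ι → ℝ) : ℝ :=
  ∑ m ∈ range (T.card + 1), fPoly m T x

lemma fPolySum_eq_one_add_sum_fPoly (T : Finset ι) (x : ι → ℝ) :
    fPolySum T x = 1 + ∑ m ∈ range T.card, fPoly (m + 1) T x := by
  rw [fPolySum, sum_range_succ', fPoly_zero, add_comm]

lemma fPolySum_eq_one_add_sum_erase (T : Finset ι) (x : ι → ℝ) :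
    fPolySum T x = 1 + ∑ v ∈ T, x v * fPolySum (T.erase v) x := by
  calc fPolySum T x = 1 + ∑ m ∈ range T.card, ∑ v ∈ T, x v * fPoly m (T.erase v) x := by
        simp only [fPolySum_eq_one_add_sum_fPoly, sum_mul_fPoly_erase]
    _ = 1 + ∑ v ∈ T, x v * fPolySum (T.erase v) x := by
        rw [sum_comm]
        refine congrArg _ (sum_congr rfl fun v hv => ?_)
        rw [fPolySum, card_erase_add_one hv, mul_sum]

end FPoly

section PathSums
variable {V : Type*}

def pathWeight (w : V → V → ℝ) {k : ℕ} (x : Fin (k + 1) → V) : ℝ :=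
  ∏ i : Fin k, w (x i.succ) (x i.castSucc)

lemma pathWeight_cons (w : V → V → ℝ) (j : V) {k : ℕ} (t : Fin (k + 1) → V) :
    pathWeight w (Fin.cons j t : Fin (k + 2) → V) = w (t 0) j * pathWeight w t := by
  simp only [pathWeight, Fin.prod_univ_succ, Fin.cons_succ, Fin.castSucc_zero, Fin.cons_zero,
    ← Fin.succ_castSucc]

variable [DecidableEq V]

def IsAcyclicPathTo (W D : Finset V) {k : ℕ} (x : Fin (k + 1) → V) : Prop :=
  Function.Injective x ∧ (∀ m : Fin (k + 1), (m : ℕ) < k → x m ∈ W \ D) ∧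
    x (Fin.last k) ∈ D

instance (W D : Finset V) (k : ℕ) : DecidablePred (IsAcyclicPathTo W D (k := k)) :=
  fun _ => by unfold IsAcyclicPathTo; infer_instance

lemma isAcyclicPathTo_cons_iff {W D : Finset V} {j : V} (hj : j ∈ W \ D) {k : ℕ}
    (t : Fin (k + 1) → V) :
    IsAcyclicPathTo W D (Fin.cons j t : Fin (k + 2) → V) ↔ IsAcyclicPathTo (W.erase j) D t := by
  rw [IsAcyclicPathTo, IsAcyclicPathTo, Fin.forall_fin_succ]
  simp only [Fin.cons_injective_iff, Fin.cons_zero, Fin.cons_succ, Fin.val_zero, Fin.val_succ,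
    ← Fin.succ_last, erase_sdiff_comm, mem_erase, Set.mem_range, not_exists]
  constructor
  · rintro ⟨⟨hjt, hinj⟩, ⟨-, hmem⟩, hlast⟩
    exact ⟨hinj, fun i hi => ⟨fun h => hjt i h, hmem i (by omega)⟩, hlast⟩
  · rintro ⟨hinj, hmem, hlast⟩
    refine ⟨⟨fun i hti => ?_, hinj⟩, ⟨fun _ => hj, fun i hi => (hmem i (by omega)).2⟩,
      hlast⟩
    rcases Fin.eq_castSucc_or_eq_last i with ⟨i, rfl⟩ | rfl
    · exact (hmem i.castSucc i.isLt).1 hti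
    · exact (mem_sdiff.1 hj).2 (hti ▸ hlast)

variable [Fintype V]

def cPathLen (w : V → V → ℝ) (W D : Finset V) (j : V) (k : ℕ) : ℝ :=
  ∑ x : Fin (k + 1) → V with x 0 = j ∧ IsAcyclicPathTo W D x, pathWeight w x

lemma cPath_eq_tsum_cPathLen (w : V → V → ℝ) (W D : Finset V) (j : V) :
    cPath w W D j = ∑' k, cPathLen w W D j k := by
  simp only [cPath, cPathLen, sum_filter]
  rfl

lemma cPathLen_eq_zero_of_card_le (w : V → V → ℝ) (W D : Finset V) (j : V) {k : ℕ}
    (hk : Fintype.card V ≤ k) : cPathLen w W D j k = 0 := by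
  refine sum_eq_zero fun x hx => absurd (Fintype.card_le_of_injective x (mem_filter.1 hx).2.2.1) ?_
  simp only [Fintype.card_fin]
  omega

lemma summable_cPathLen (w : V → V → ℝ) (W D : Finset V) (j : V) :
    Summable (cPathLen w W D j) :=
  summable_of_ne_finset_zero (s := range (Fintype.card V)) fun _k hk =>
    cPathLen_eq_zero_of_card_le w W D j (by simpa using hk)

lemma cPathLen_zero (w : V → V → ℝ) (W D : Finset V) (j : V) :
    cPathLen w W D j 0 = if j ∈ D then 1 else 0 := by
  have hpath (x : Fin 1 → V) :
      x 0 = j ∧ IsAcyclicPathTo W D x ↔ x = (fun _ => j) ∧ j ∈ D := by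
    constructor
    · rintro ⟨rfl, -, -, hD⟩
      exact ⟨funext fun m => congrArg x (Subsingleton.elim (α := Fin 1) m 0), hD⟩
    · rintro ⟨rfl, hD⟩
      exact ⟨rfl, fun a b _ => Subsingleton.elim (α := Fin 1) a b,
        fun m hm => absurd hm m.val.not_lt_zero, hD⟩
  simp only [cPathLen, hpath, filter_and, filter_eq', mem_univ, if_true]
  split_ifs <;> simp [pathWeight, *]

lemma cPathLen_succ (w : V → V → ℝ) (W D : Finset V) (j : V) (k : ℕ) :
    cPathLen w W D j (k + 1)
      = if j ∈ W \ D then ∑ v, w v j * cPathLen w (W.erase j) D v k else 0 := by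
  split_ifs with hj
  · calc cPathLen w W D j (k + 1)
        = ∑ t : Fin (k + 1) → V with IsAcyclicPathTo (W.erase j) D t,
            pathWeight w (Fin.cons j t : Fin (k + 2) → V) := by
          have hcons {x : Fin (k + 2) → V} (h0 : x 0 = j) : Fin.cons j (Fin.tail x) = x := by
            rw [← h0, Fin.cons_self_tail]
          refine sum_nbij' Fin.tail (fun t => (Fin.cons j t : Fin (k + 2) → V))
            (fun x hx => ?_) (fun t ht => ?_)
            (fun x hx => hcons (mem_filter.1 hx).2.1) (fun _ _ => rfl)
            (fun x hx => by rw [hcons (mem_filter.1 hx).2.1])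
          · obtain ⟨-, h0, hx⟩ := mem_filter.1 hx
            rw [← hcons h0, isAcyclicPathTo_cons_iff hj] at hx
            exact mem_filter.2 ⟨mem_univ _, hx⟩
          · exact mem_filter.2 ⟨mem_univ _, Fin.cons_zero _ _,
              (isAcyclicPathTo_cons_iff hj t).2 (mem_filter.1 ht).2⟩
      _ = ∑ t : Fin (k + 1) → V with IsAcyclicPathTo (W.erase j) D t,
            w (t 0) j * pathWeight w t :=
          sum_congr rfl fun t _ => pathWeight_cons w j t
      _ = ∑ v, ∑ t : Fin (k + 1) → V with IsAcyclicPathTo (W.erase j) D t ∧ t 0 = v,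
            w (t 0) j * pathWeight w t := by
          simp only [← filter_filter, sum_fiberwise]
      _ = ∑ v, w v j * cPathLen w (W.erase j) D v k := by
          refine sum_congr rfl fun v _ => ?_
          rw [cPathLen, mul_sum]
          refine sum_congr (by simp only [and_comm]) fun t ht => ?_
          rw [(mem_filter.1 ht).2.1]
  · refine sum_eq_zero fun x hx => absurd ?_ hj
    obtain ⟨-, h0, -, hmem, -⟩ := mem_filter.1 hx
    exact h0 ▸ hmem 0 (Nat.succ_pos k)

lemma cPath_eq_add_sum_cPath_erase (w : V → V → ℝ) (W D : Finset V) (j : V) :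
    cPath w W D j = (if j ∈ D then 1 else 0)
      + if j ∈ W \ D then ∑ v, w v j * cPath w (W.erase j) D v else 0 := by
  rw [cPath_eq_tsum_cPathLen, (summable_cPathLen w W D j).tsum_eq_zero_add, cPathLen_zero]
  congr 1
  simp only [cPathLen_succ]
  split_ifs
  · rw [Summable.tsum_finsetSum fun v _ => (summable_cPathLen w _ D v).mul_left _]
    simp only [tsum_mul_left, cPath_eq_tsum_cPathLen]
  · rw [tsum_zero]

lemma sum_cPath_eq_card_mul_fPolySum (β : V → ℝ) (W D : Finset V) :
    ∑ j, cPath (fun _ i => β i) W D j = D.card * fPolySum (W \ D) β := by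
  induction W using Finset.strongInduction with
  | H W ih =>
  have herase : ∀ j ∈ W \ D, ∑ v, cPath (fun _ i => β i) (W.erase j) D v
      = D.card * fPolySum ((W \ D).erase j) β := fun j hj => by
    rw [ih _ (erase_ssubset (mem_sdiff.1 hj).1), erase_sdiff_comm]
  calc ∑ j, cPath (fun _ i => β i) W D j
      = D.card + ∑ j ∈ W \ D, β j * ∑ v, cPath (fun _ i => β i) (W.erase j) D v := by
        simp only [cPath_eq_add_sum_cPath_erase _ W, sum_add_distrib, ← mul_sum, sum_ite_mem,
          univ_inter, sum_const, nsmul_one]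
    _ = D.card * fPolySum (W \ D) β := by
        rw [sum_congr rfl fun j hj => by rw [herase j hj], fPolySum_eq_one_add_sum_erase,
          mul_add, mul_one, mul_sum]
        congr 1
        exact sum_congr rfl fun j _ => by ring

end PathSums

theorem stmt14_general (n K k : ℕ) (β : Fin n → ℝ)
    (A₀ : Finset (Fin n)) (hK : A₀.card = K)
    (jf : Fin k → Fin n) (hjf : Function.Injective jf)
    (hjfim : Finset.image jf Finset.univ = Finset.univ \ A₀) :
    sigmaInfl (fun _ j => β j) Finset.univ A₀
      = (K : ℝ) + (K : ℝ) *
          ∑ m ∈ Finset.range k,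
            fPoly (m + 1) (Finset.univ : Finset (Fin k)) (fun l => β (jf l)) := by
  have hcompl : univ \ A₀ = univ.map ⟨jf, hjf⟩ := by
    rw [map_eq_image]
    exact hjfim.symm
  rw [sigmaInfl, sum_cPath_eq_card_mul_fPolySum, hK, hcompl, fPolySum_eq_one_add_sum_fPoly, card_map,
    card_univ, Fintype.card_fin]
  simp only [fPoly_map, mul_add, mul_one]
  rfl

theorem stmt14 (n K k : ℕ) (β : Fin n → ℝ) (hβ : ∀ i, 0 ≤ β i)
    (hsum : ∀ j : Fin n, ((n : ℝ) - 1) * β j ≤ 1)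
    (A₀ : Finset (Fin n)) (hK : A₀.card = K) (hk : k = n - K)
    (jf : Fin k → Fin n) (hjf : Function.Injective jf)
    (hjfim : Finset.image jf Finset.univ = Finset.univ \ A₀) :
    sigmaInfl (fun _ j => β j) Finset.univ A₀
      = (K : ℝ) + (K : ℝ) *
          ∑ m ∈ Finset.range k,
            fPoly (m + 1) (Finset.univ : Finset (Fin k)) (fun l => β (jf l)) :=
  stmt14_general n K k β A₀ hK jf hjf hjfim
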